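/- arXiv:solv-int/9811007 — 4 statements merged into one kernel-verified Lean document; each statement's English description precedes it below -/
import Mathlib

section
/- Consider the Hamiltonian system on the open set of ℝ²ⁿ where the λᵢ are pairwise distinct, with Hamiltonian H(λ,μ) = Σᵢ gᵢ(λᵢ) e^{aμᵢ} / Πⱼ≠ᵢ(λᵢ - λⱼ), where gᵢ are smooth and a ∈ ℝ. Then any solution of the canonical Hamilton equations λ̇ᵢ = ∂H/∂μᵢ, μ̇ᵢ = -∂H/∂λᵢ satisfies the Newton equations λ̈ₖ = 2 Σ_{i≠k} λ̇ᵢ λ̇ₖ / (λₖ - λᵢ) for all k. -/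
open Real Finset

/-- The Hamiltonian `H(λ,μ) = ∑ᵢ gᵢ(λᵢ) e^{aμᵢ} / ∏_{j≠i}(λᵢ - λⱼ)`. -/
noncomputable def calogeroH (n : ℕ) (g : Fin n → ℝ → ℝ) (a : ℝ)
    (lam mu : Fin n → ℝ) : ℝ :=
  ∑ i : Fin n, g i (lam i) * Real.exp (a * mu i) /
    ∏ j ∈ (Finset.univ : Finset (Fin n)).erase i, (lam i - lam j)

lemma calo_prod_ne {n : ℕ} {L : Fin n → ℝ} (hL : Function.Injective L) (i : Fin n) :
    (∏ j ∈ (Finset.univ : Finset (Fin n)).erase i, (L i - L j)) ≠ 0 := by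
  refine Finset.prod_ne_zero_iff.mpr fun j hj => ?_
  exact sub_ne_zero.mpr fun h => (Finset.mem_erase.mp hj).1 (hL h).symm

lemma calo_deriv_mu (n : ℕ) (g : Fin n → ℝ → ℝ) (a : ℝ) (L M : Fin n → ℝ) (i : Fin n) :
    deriv (fun y => calogeroH n g a L (Function.update M i y)) (M i)
      = a * (g i (L i) * Real.exp (a * M i) /
          ∏ j ∈ (Finset.univ : Finset (Fin n)).erase i, (L i - L j)) := by
  have hfun : (fun y => calogeroH n g a L (Function.update M i y))
      = fun y => (∑ j ∈ (Finset.univ : Finset (Fin n)).erase i,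
          g j (L j) * Real.exp (a * M j) / ∏ l ∈ Finset.univ.erase j, (L j - L l))
        + g i (L i) * Real.exp (a * y) / ∏ l ∈ Finset.univ.erase i, (L i - L l) := by
    funext y
    unfold calogeroH
    rw [← Finset.sum_erase_add _ _ (Finset.mem_univ i), Function.update_self]
    congr 1
    refine Finset.sum_congr rfl fun j hj => ?_
    rw [Function.update_of_ne (Finset.mem_erase.mp hj).1]
  rw [hfun]
  have h : HasDerivAt (fun y : ℝ => (∑ j ∈ (Finset.univ : Finset (Fin n)).erase i,
          g j (L j) * Real.exp (a * M j) / ∏ l ∈ Finset.univ.erase j, (L j - L l))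
        + g i (L i) * Real.exp (a * y) / ∏ l ∈ Finset.univ.erase i, (L i - L l))
      (0 + g i (L i) * (Real.exp (a * M i) * (a * 1)) / ∏ l ∈ Finset.univ.erase i, (L i - L l))
      (M i) :=
    (hasDerivAt_const _ _).add
      ((((hasDerivAt_id (M i)).const_mul a).exp.const_mul (g i (L i))).div_const _)
  rw [h.deriv]
  ring

lemma calo_deriv_lam (n : ℕ) (g : Fin n → ℝ → ℝ) (hg : ∀ i, ContDiff ℝ (⊤ : ℕ∞) (g i)) (a : ℝ)
    (L M : Fin n → ℝ) (hL : Function.Injective L) (k : Fin n) :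
    deriv (fun x => calogeroH n g a (Function.update L k x) M) (L k)
      = Real.exp (a * M k) * (deriv (g k) (L k)
            - g k (L k) * ∑ j ∈ (Finset.univ : Finset (Fin n)).erase k, (L k - L j)⁻¹)
          / (∏ j ∈ (Finset.univ : Finset (Fin n)).erase k, (L k - L j))
        + ∑ j ∈ (Finset.univ : Finset (Fin n)).erase k,
            (g j (L j) * Real.exp (a * M j) / ∏ l ∈ Finset.univ.erase j, (L j - L l))
              / (L j - L k) := by
  classical
  set s : Finset (Fin n) := (Finset.univ : Finset (Fin n)).erase k with hs
  set R : ℝ := ∏ j ∈ s, (L k - L j) with hR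
  have hRne : R ≠ 0 := calo_prod_ne hL k
  -- derivative value for each summand
  set D : Fin n → ℝ := fun j => if j = k then
      Real.exp (a * M k) * (deriv (g k) (L k) - g k (L k) * ∑ j ∈ s, (L k - L j)⁻¹) / R
    else (g j (L j) * Real.exp (a * M j) / ∏ l ∈ Finset.univ.erase j, (L j - L l)) / (L j - L k)
    with hD
  have hsum : HasDerivAt (fun x => calogeroH n g a (Function.update L k x) M)
      (∑ j : Fin n, D j) (L k) := by
    unfold calogeroH
    refine HasDerivAt.fun_sum fun j _ => ?_
    by_cases hjk : j = k
    · subst hjk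
      -- the j = k term
      have hfun : (fun x => g j (Function.update L j x j) * Real.exp (a * M j) /
            ∏ l ∈ Finset.univ.erase j, (Function.update L j x j - Function.update L j x l))
          = fun x => g j x * Real.exp (a * M j) / ∏ l ∈ s, (x - L l) := by
        funext x
        rw [Function.update_self]
        congr 1
        refine Finset.prod_congr rfl fun l hl => ?_
        rw [Function.update_of_ne (Finset.mem_erase.mp hl).1]
      rw [hfun, hD]
      simp only [if_pos rfl]
      have hgd : HasDerivAt (g j) (deriv (g j) (L j)) (L j) :=
        (((hg j).differentiable (by simp)) (L j)).hasDerivAt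
      have hp : HasDerivAt (fun x => ∏ l ∈ s, (x - L l))
          (∑ l ∈ s, (∏ m ∈ s.erase l, (L j - L m)) • (1:ℝ)) (L j) :=
        HasDerivAt.fun_finsetProd fun l _ => (hasDerivAt_id _).sub_const (L l)
      have hp' : (∑ l ∈ s, (∏ m ∈ s.erase l, (L j - L m)) • (1:ℝ))
          = R * ∑ l ∈ s, (L j - L l)⁻¹ := by
        rw [Finset.mul_sum]
        refine Finset.sum_congr rfl fun l hl => ?_
        have hne : L j - L l ≠ 0 :=
          sub_ne_zero.mpr fun h => (Finset.mem_erase.mp hl).1 (hL h).symm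
        have hRe : R = (L j - L l) * ∏ m ∈ s.erase l, (L j - L m) :=
          (Finset.mul_prod_erase s _ hl).symm
        rw [smul_eq_mul, mul_one, hRe]
        field_simp
      rw [hp'] at hp
      have h5 := (hgd.mul_const (Real.exp (a * M j))).fun_div hp hRne
      refine h5.congr_deriv ?_
      simp only [↓reduceIte, ← hR]
      field_simp
    · -- the j ≠ k term
      have hkj : k ∈ Finset.univ.erase j :=
        Finset.mem_erase.mpr ⟨fun h => hjk h.symm, Finset.mem_univ k⟩
      set Q : ℝ := ∏ l ∈ (Finset.univ.erase j).erase k, (L j - L l) with hQ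
      have hQne : Q ≠ 0 := by
        refine Finset.prod_ne_zero_iff.mpr fun l hl => ?_
        have : l ≠ j := (Finset.mem_erase.mp (Finset.mem_erase.mp hl).2).1
        exact sub_ne_zero.mpr fun h => this (hL h).symm
      have hjkne : L j - L k ≠ 0 := sub_ne_zero.mpr fun h => hjk (hL h)
      have hfun : (fun x => g j (Function.update L k x j) * Real.exp (a * M j) /
            ∏ l ∈ Finset.univ.erase j, (Function.update L k x j - Function.update L k x l))
          = fun x => g j (L j) * Real.exp (a * M j) / ((L j - x) * Q) := by
        funext x
        rw [Function.update_of_ne hjk, ← Finset.mul_prod_erase _ _ hkj,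
          Function.update_self]
        congr 2
        refine Finset.prod_congr rfl fun l hl => ?_
        rw [Function.update_of_ne (Finset.mem_erase.mp hl).1]
      rw [hfun, hD]
      simp only [if_neg hjk]
      have hden : HasDerivAt (fun x => (L j - x) * Q) (-1 * Q) (L k) :=
        (((hasDerivAt_id (L k)).const_sub (L j))).mul_const Q
      have hdne : (L j - L k) * Q ≠ 0 := mul_ne_zero hjkne hQne
      have h5 := (hasDerivAt_const (L k) (g j (L j) * Real.exp (a * M j))).fun_div hden hdne
      refine h5.congr_deriv ?_
      rw [← Finset.mul_prod_erase _ _ hkj, ← hQ]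
      field_simp
      ring
  rw [hsum.deriv, ← Finset.sum_erase_add _ _ (Finset.mem_univ k), hD]
  simp only [if_pos rfl]
  rw [add_comm]
  congr 1
  refine Finset.sum_congr rfl fun j hj => ?_
  rw [if_neg (Finset.mem_erase.mp hj).1]

/-- any solution of the canonical Hamilton equations
`λ̇ᵢ = ∂H/∂μᵢ`, `μ̇ᵢ = -∂H/∂λᵢ` for the Hamiltonian
`H(λ,μ) = ∑ᵢ gᵢ(λᵢ) e^{aμᵢ}/∏_{j≠i}(λᵢ-λⱼ)` (on the region of pairwise
distinct `λᵢ`) satisfies the Newton equations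
`λ̈ₖ = 2 ∑_{i≠k} λ̇ᵢ λ̇ₖ/(λₖ - λᵢ)`. -/
theorem stmt3 (n : ℕ) (g : Fin n → ℝ → ℝ) (hg : ∀ i, ContDiff ℝ (⊤ : ℕ∞) (g i)) (a : ℝ)
    (lam mu lam' mu' lam'' : ℝ → Fin n → ℝ)
    (hdist : ∀ t : ℝ, Function.Injective (lam t))
    (hlam : ∀ t i, HasDerivAt (fun s => lam s i) (lam' t i) t)
    (hmu : ∀ t i, HasDerivAt (fun s => mu s i) (mu' t i) t)
    (hlam2 : ∀ t i, HasDerivAt (fun s => lam' s i) (lam'' t i) t)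
    (ham1 : ∀ t i, lam' t i =
      deriv (fun y => calogeroH n g a (lam t) (Function.update (mu t) i y)) (mu t i))
    (ham2 : ∀ t i, mu' t i =
      - deriv (fun x => calogeroH n g a (Function.update (lam t) i x) (mu t)) (lam t i)) :
    ∀ t : ℝ, ∀ k : Fin n,
      lam'' t k = 2 * ∑ i ∈ (Finset.univ : Finset (Fin n)).erase k,
        lam' t i * lam' t k / (lam t k - lam t i) := by
  have hA : ∀ (τ : ℝ) (i : Fin n), lam' τ i
      = a * (g i (lam τ i) * Real.exp (a * mu τ i) /
          ∏ j ∈ (Finset.univ : Finset (Fin n)).erase i, (lam τ i - lam τ j)) := by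
    intro τ i
    rw [ham1 τ i, calo_deriv_mu]
  intro t k
  have hinj := hdist t
  have hRne : (∏ j ∈ (Finset.univ : Finset (Fin n)).erase k, (lam t k - lam t j)) ≠ 0 :=
    calo_prod_ne hinj k
  have hB : mu' t k = -(Real.exp (a * mu t k) * (deriv (g k) (lam t k)
        - g k (lam t k) * ∑ j ∈ (Finset.univ : Finset (Fin n)).erase k,
            (lam t k - lam t j)⁻¹)
      / (∏ j ∈ (Finset.univ : Finset (Fin n)).erase k, (lam t k - lam t j))
      + ∑ j ∈ (Finset.univ : Finset (Fin n)).erase k,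
          (g j (lam t j) * Real.exp (a * mu t j) /
            ∏ l ∈ Finset.univ.erase j, (lam t j - lam t l)) / (lam t j - lam t k)) := by
    rw [ham2 t k, calo_deriv_lam n g hg a (lam t) (mu t) hinj k]
  -- derivative of t ↦ λ'_k(t) via the explicit formula
  have h1 : HasDerivAt (fun s' => g k (lam s' k)) (deriv (g k) (lam t k) * lam' t k) t := by
    have hgd : HasDerivAt (g k) (deriv (g k) (lam t k)) (lam t k) :=
      (((hg k).differentiable (by simp)) (lam t k)).hasDerivAt
    exact hgd.comp t (hlam t k)
  have h2 : HasDerivAt (fun s' => Real.exp (a * mu s' k))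
      (Real.exp (a * mu t k) * (a * mu' t k)) t := ((hmu t k).const_mul a).exp
  have h3 : HasDerivAt
      (fun s' => ∏ j ∈ (Finset.univ : Finset (Fin n)).erase k, (lam s' k - lam s' j))
      (∑ j ∈ (Finset.univ : Finset (Fin n)).erase k,
        (∏ m ∈ ((Finset.univ : Finset (Fin n)).erase k).erase j, (lam t k - lam t m)) •
          (lam' t k - lam' t j)) t :=
    HasDerivAt.fun_finsetProd fun j _ => (hlam t k).sub (hlam t j)
  have hS1 : (∑ j ∈ (Finset.univ : Finset (Fin n)).erase k,
        (∏ m ∈ ((Finset.univ : Finset (Fin n)).erase k).erase j, (lam t k - lam t m)) •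
          (lam' t k - lam' t j))
      = (∏ j ∈ (Finset.univ : Finset (Fin n)).erase k, (lam t k - lam t j)) *
          ∑ j ∈ (Finset.univ : Finset (Fin n)).erase k,
            (lam' t k - lam' t j) / (lam t k - lam t j) := by
    rw [Finset.mul_sum]
    refine Finset.sum_congr rfl fun j hj => ?_
    have hne : lam t k - lam t j ≠ 0 :=
      sub_ne_zero.mpr fun h => (Finset.mem_erase.mp hj).1 (hinj h).symm
    rw [smul_eq_mul, ← Finset.mul_prod_erase _ (fun j' => lam t k - lam t j') hj]
    field_simp
  have h5 : HasDerivAt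
      (fun s' => g k (lam s' k) * Real.exp (a * mu s' k) /
        ∏ j ∈ (Finset.univ : Finset (Fin n)).erase k, (lam s' k - lam s' j))
      (((deriv (g k) (lam t k) * lam' t k * Real.exp (a * mu t k)
          + g k (lam t k) * (Real.exp (a * mu t k) * (a * mu' t k))) *
            (∏ j ∈ (Finset.univ : Finset (Fin n)).erase k, (lam t k - lam t j))
        - g k (lam t k) * Real.exp (a * mu t k) *
            (∑ j ∈ (Finset.univ : Finset (Fin n)).erase k,
              (∏ m ∈ ((Finset.univ : Finset (Fin n)).erase k).erase j, (lam t k - lam t m)) •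
                (lam' t k - lam' t j))) /
        (∏ j ∈ (Finset.univ : Finset (Fin n)).erase k, (lam t k - lam t j)) ^ 2) t :=
    (h1.mul h2).div h3 hRne
  rw [hS1] at h5
  have hlp : (fun s' => lam' s' k)
      = fun s' => a * (g k (lam s' k) * Real.exp (a * mu s' k) /
          ∏ j ∈ (Finset.univ : Finset (Fin n)).erase k, (lam s' k - lam s' j)) :=
    funext fun τ => hA τ k
  have h6 : HasDerivAt (fun s' => lam' s' k)
      (a * (((deriv (g k) (lam t k) * lam' t k * Real.exp (a * mu t k)
          + g k (lam t k) * (Real.exp (a * mu t k) * (a * mu' t k))) *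
            (∏ j ∈ (Finset.univ : Finset (Fin n)).erase k, (lam t k - lam t j))
        - g k (lam t k) * Real.exp (a * mu t k) *
            ((∏ j ∈ (Finset.univ : Finset (Fin n)).erase k, (lam t k - lam t j)) *
              ∑ j ∈ (Finset.univ : Finset (Fin n)).erase k,
                (lam' t k - lam' t j) / (lam t k - lam t j))) /
        (∏ j ∈ (Finset.univ : Finset (Fin n)).erase k, (lam t k - lam t j)) ^ 2)) t := by
    rw [hlp]
    exact h5.const_mul a
  have hkey := (hlam2 t k).unique h6
  -- rewrite a * μ'_k using hB and Hamilton's first equations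
  have hS2 : a * ∑ j ∈ (Finset.univ : Finset (Fin n)).erase k,
        (g j (lam t j) * Real.exp (a * mu t j) /
          ∏ l ∈ Finset.univ.erase j, (lam t j - lam t l)) / (lam t j - lam t k)
      = ∑ j ∈ (Finset.univ : Finset (Fin n)).erase k, lam' t j / (lam t j - lam t k) := by
    rw [Finset.mul_sum]
    refine Finset.sum_congr rfl fun j hj => ?_
    rw [hA t j]
    ring
  have hamu : a * mu' t k
      = -(a * (Real.exp (a * mu t k) * (deriv (g k) (lam t k)
            - g k (lam t k) * ∑ j ∈ (Finset.univ : Finset (Fin n)).erase k,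
                (lam t k - lam t j)⁻¹)
          / (∏ j ∈ (Finset.univ : Finset (Fin n)).erase k, (lam t k - lam t j))))
        - ∑ j ∈ (Finset.univ : Finset (Fin n)).erase k, lam' t j / (lam t j - lam t k) := by
    rw [hB, ← hS2]
    ring
  rw [hamu] at hkey
  have hvk := hA t k
  have hmain : lam'' t k = lam' t k *
      (lam' t k * (∑ j ∈ (Finset.univ : Finset (Fin n)).erase k, (lam t k - lam t j)⁻¹)
        - (∑ j ∈ (Finset.univ : Finset (Fin n)).erase k, lam' t j / (lam t j - lam t k))
        - (∑ j ∈ (Finset.univ : Finset (Fin n)).erase k,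
            (lam' t k - lam' t j) / (lam t k - lam t j))) := by
    rw [hkey, hvk]
    field_simp
    ring
  rw [hmain]
  have hsum2 : lam' t k * (∑ j ∈ (Finset.univ : Finset (Fin n)).erase k,
          (lam t k - lam t j)⁻¹)
        - (∑ j ∈ (Finset.univ : Finset (Fin n)).erase k, lam' t j / (lam t j - lam t k))
        - (∑ j ∈ (Finset.univ : Finset (Fin n)).erase k,
            (lam' t k - lam' t j) / (lam t k - lam t j))
      = ∑ j ∈ (Finset.univ : Finset (Fin n)).erase k,
          2 * (lam' t j / (lam t k - lam t j)) := by
    rw [Finset.mul_sum, ← Finset.sum_sub_distrib, ← Finset.sum_sub_distrib]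
    refine Finset.sum_congr rfl fun j hj => ?_
    have hne : lam t k - lam t j ≠ 0 :=
      sub_ne_zero.mpr fun h => (Finset.mem_erase.mp hj).1 (hinj h).symm
    have hne' : lam t j - lam t k ≠ 0 :=
      sub_ne_zero.mpr fun h => (Finset.mem_erase.mp hj).1 (hinj h)
    field_simp
    ring
  rw [hsum2, Finset.mul_sum, Finset.mul_sum]
  refine Finset.sum_congr rfl fun j hj => ?_
  ring
end

section
/- For n = 2, along any solution of the Hamiltonian system with H = (g₁(λ₁)e^{aμ₁} - g₂(λ₂)e^{aμ₂})/(λ₁ - λ₂) on the region λ₁ ≠ λ₂, the function K = (λ₂ g₁(λ₁)e^{aμ₁} - λ₁ g₂(λ₂)e^{aμ₂})/(λ₁ - λ₂) is a constant of motion, i.e., d/dt K(λ(t), μ(t)) = 0. -/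
open Real

/-- The `n = 2` Hamiltonian `H = (g₁(λ₁)e^{aμ₁} - g₂(λ₂)e^{aμ₂})/(λ₁-λ₂)`. -/
noncomputable def H2 (g1 g2 : ℝ → ℝ) (a x1 x2 y1 y2 : ℝ) : ℝ :=
  (g1 x1 * Real.exp (a * y1) - g2 x2 * Real.exp (a * y2)) / (x1 - x2)

/-- The function `K = (λ₂g₁(λ₁)e^{aμ₁} - λ₁g₂(λ₂)e^{aμ₂})/(λ₁-λ₂)`. -/
noncomputable def K2 (g1 g2 : ℝ → ℝ) (a x1 x2 y1 y2 : ℝ) : ℝ :=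
  (x2 * g1 x1 * Real.exp (a * y1) - x1 * g2 x2 * Real.exp (a * y2)) / (x1 - x2)

/-- along any solution of the canonical Hamilton equations for `H2`
on the region `λ₁ ≠ λ₂`, the function `K2` is a constant of motion. -/
theorem stmt4 (g1 g2 : ℝ → ℝ) (hg1 : ContDiff ℝ (⊤ : ℕ∞) g1) (hg2 : ContDiff ℝ (⊤ : ℕ∞) g2) (a : ℝ)
    (l1 l2 m1 m2 l1' l2' m1' m2' : ℝ → ℝ)
    (hdist : ∀ t, l1 t ≠ l2 t)
    (hl1 : ∀ t, HasDerivAt l1 (l1' t) t) (hl2 : ∀ t, HasDerivAt l2 (l2' t) t)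
    (hm1 : ∀ t, HasDerivAt m1 (m1' t) t) (hm2 : ∀ t, HasDerivAt m2 (m2' t) t)
    (ham1 : ∀ t, l1' t = deriv (fun y => H2 g1 g2 a (l1 t) (l2 t) y (m2 t)) (m1 t))
    (ham2 : ∀ t, l2' t = deriv (fun y => H2 g1 g2 a (l1 t) (l2 t) (m1 t) y) (m2 t))
    (ham3 : ∀ t, m1' t = - deriv (fun x => H2 g1 g2 a x (l2 t) (m1 t) (m2 t)) (l1 t))
    (ham4 : ∀ t, m2' t = - deriv (fun x => H2 g1 g2 a (l1 t) x (m1 t) (m2 t)) (l2 t)) :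
    ∀ t : ℝ, HasDerivAt (fun s => K2 g1 g2 a (l1 s) (l2 s) (m1 s) (m2 s)) 0 t := by
  intro t
  have hD : l1 t - l2 t ≠ 0 := sub_ne_zero.mpr (hdist t)
  have hg1d : ∀ x, HasDerivAt g1 (deriv g1 x) x := fun x =>
    (hg1.differentiable (by simp) x).hasDerivAt
  have hg2d : ∀ x, HasDerivAt g2 (deriv g2 x) x := fun x =>
    (hg2.differentiable (by simp) x).hasDerivAt
  -- explicit Hamilton equations
  have h1 : l1' t = g1 (l1 t) * (Real.exp (a * m1 t) * a) / (l1 t - l2 t) := by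
    rw [ham1 t]
    have h : HasDerivAt (fun y => H2 g1 g2 a (l1 t) (l2 t) y (m2 t))
        (g1 (l1 t) * (Real.exp (a * m1 t) * a) / (l1 t - l2 t)) (m1 t) := by
      unfold H2
      have := ((((hasDerivAt_id (m1 t)).const_mul a).exp.const_mul (g1 (l1 t))).sub_const
        (g2 (l2 t) * Real.exp (a * m2 t))).div_const (l1 t - l2 t)
      refine this.congr_deriv ?_
      simp only [id_eq]
      ring
    exact h.deriv
  have h2 : l2' t = -(g2 (l2 t) * (Real.exp (a * m2 t) * a)) / (l1 t - l2 t) := by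
    rw [ham2 t]
    have h : HasDerivAt (fun y => H2 g1 g2 a (l1 t) (l2 t) (m1 t) y)
        (-(g2 (l2 t) * (Real.exp (a * m2 t) * a)) / (l1 t - l2 t)) (m2 t) := by
      unfold H2
      have := (((((hasDerivAt_id (m2 t)).const_mul a).exp.const_mul (g2 (l2 t))).const_sub
        (g1 (l1 t) * Real.exp (a * m1 t)))).div_const (l1 t - l2 t)
      refine this.congr_deriv ?_
      simp only [id_eq]
      ring
    exact h.deriv
  have h3 : m1' t = -((deriv g1 (l1 t) * Real.exp (a * m1 t) * (l1 t - l2 t) -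
      (g1 (l1 t) * Real.exp (a * m1 t) - g2 (l2 t) * Real.exp (a * m2 t))) /
      (l1 t - l2 t) ^ 2) := by
    rw [ham3 t]
    have h : HasDerivAt (fun x => H2 g1 g2 a x (l2 t) (m1 t) (m2 t))
        ((deriv g1 (l1 t) * Real.exp (a * m1 t) * (l1 t - l2 t) -
          (g1 (l1 t) * Real.exp (a * m1 t) - g2 (l2 t) * Real.exp (a * m2 t)) * 1) /
          (l1 t - l2 t) ^ 2) (l1 t) := by
      unfold H2
      exact HasDerivAt.div
        (((hg1d (l1 t)).mul_const (Real.exp (a * m1 t))).sub_const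
          (g2 (l2 t) * Real.exp (a * m2 t)))
        ((hasDerivAt_id (l1 t)).sub_const (l2 t)) hD
    rw [h.deriv]; ring
  have h4 : m2' t = -((-(deriv g2 (l2 t) * Real.exp (a * m2 t)) * (l1 t - l2 t) +
      (g1 (l1 t) * Real.exp (a * m1 t) - g2 (l2 t) * Real.exp (a * m2 t))) /
      (l1 t - l2 t) ^ 2) := by
    rw [ham4 t]
    have h : HasDerivAt (fun x => H2 g1 g2 a (l1 t) x (m1 t) (m2 t))
        ((-(deriv g2 (l2 t) * Real.exp (a * m2 t)) * (l1 t - l2 t) -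
          (g1 (l1 t) * Real.exp (a * m1 t) - g2 (l2 t) * Real.exp (a * m2 t)) * (-1)) /
          (l1 t - l2 t) ^ 2) (l2 t) := by
      unfold H2
      have hnum : HasDerivAt
          (fun x => g1 (l1 t) * Real.exp (a * m1 t) - g2 x * Real.exp (a * m2 t))
          (-(deriv g2 (l2 t) * Real.exp (a * m2 t))) (l2 t) := by
        have := ((hg2d (l2 t)).mul_const (Real.exp (a * m2 t))).const_sub
          (g1 (l1 t) * Real.exp (a * m1 t))
        exact this
      have hden : HasDerivAt (fun x => l1 t - x) (-1 : ℝ) (l2 t) := by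
        simpa using (hasDerivAt_id (l2 t)).const_sub (l1 t)
      exact hnum.div hden hD
    rw [h.deriv]; ring
  -- build the derivative of K along the solution
  have hexp1 : HasDerivAt (fun s => Real.exp (a * m1 s))
      (Real.exp (a * m1 t) * (a * m1' t)) t := ((hm1 t).const_mul a).exp
  have hexp2 : HasDerivAt (fun s => Real.exp (a * m2 s))
      (Real.exp (a * m2 t) * (a * m2' t)) t := ((hm2 t).const_mul a).exp
  have hc1 : HasDerivAt (fun s => g1 (l1 s)) (deriv g1 (l1 t) * l1' t) t :=
    (hg1d (l1 t)).comp t (hl1 t)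
  have hc2 : HasDerivAt (fun s => g2 (l2 s)) (deriv g2 (l2 t) * l2' t) t :=
    (hg2d (l2 t)).comp t (hl2 t)
  have hnum : HasDerivAt
      (fun s => l2 s * g1 (l1 s) * Real.exp (a * m1 s) -
        l1 s * g2 (l2 s) * Real.exp (a * m2 s))
      ((l2' t * g1 (l1 t) + l2 t * (deriv g1 (l1 t) * l1' t)) * Real.exp (a * m1 t) +
        l2 t * g1 (l1 t) * (Real.exp (a * m1 t) * (a * m1' t)) -
        ((l1' t * g2 (l2 t) + l1 t * (deriv g2 (l2 t) * l2' t)) * Real.exp (a * m2 t) +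
        l1 t * g2 (l2 t) * (Real.exp (a * m2 t) * (a * m2' t)))) t :=
    (((hl2 t).mul hc1).mul hexp1).sub (((hl1 t).mul hc2).mul hexp2)
  have hden : HasDerivAt (fun s => l1 s - l2 s) (l1' t - l2' t) t := (hl1 t).sub (hl2 t)
  have hK := hnum.div hden hD
  have heq : (((l2' t * g1 (l1 t) + l2 t * (deriv g1 (l1 t) * l1' t)) * Real.exp (a * m1 t) +
        l2 t * g1 (l1 t) * (Real.exp (a * m1 t) * (a * m1' t)) -
        ((l1' t * g2 (l2 t) + l1 t * (deriv g2 (l2 t) * l2' t)) * Real.exp (a * m2 t) +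
        l1 t * g2 (l2 t) * (Real.exp (a * m2 t) * (a * m2' t)))) * (l1 t - l2 t) -
        (l2 t * g1 (l1 t) * Real.exp (a * m1 t) -
          l1 t * g2 (l2 t) * Real.exp (a * m2 t)) * (l1' t - l2' t)) /
        (l1 t - l2 t) ^ 2 = 0 := by
    rw [h1, h2, h3, h4]
    field_simp
    ring
  rw [heq] at hK
  exact hK
end

section
/- For n = 2, the canonical Poisson bracket {H, K} of H = (g₁(λ₁)e^{aμ₁} - g₂(λ₂)e^{aμ₂})/(λ₁ - λ₂) and K = (λ₂ g₁(λ₁)e^{aμ₁} - λ₁ g₂(λ₂)e^{aμ₂})/(λ₁ - λ₂) vanishes identically on the region λ₁ ≠ λ₂. -/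
open Real

/-- the canonical Poisson bracket
`{H,K} = ∑ᵢ (∂H/∂λᵢ ∂K/∂μᵢ - ∂H/∂μᵢ ∂K/∂λᵢ)` of `H2` and `K2` vanishes
identically on the region `λ₁ ≠ λ₂`. -/
theorem stmt5 (g1 g2 : ℝ → ℝ) (hg1 : ContDiff ℝ (⊤ : ℕ∞) g1) (hg2 : ContDiff ℝ (⊤ : ℕ∞) g2) (a : ℝ)
    (x1 x2 y1 y2 : ℝ) (hdist : x1 ≠ x2) :
      deriv (fun x => H2 g1 g2 a x x2 y1 y2) x1 *
        deriv (fun y => K2 g1 g2 a x1 x2 y y2) y1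
    - deriv (fun y => H2 g1 g2 a x1 x2 y y2) y1 *
        deriv (fun x => K2 g1 g2 a x x2 y1 y2) x1
    + deriv (fun x => H2 g1 g2 a x1 x y1 y2) x2 *
        deriv (fun y => K2 g1 g2 a x1 x2 y1 y) y2
    - deriv (fun y => H2 g1 g2 a x1 x2 y1 y) y2 *
        deriv (fun x => K2 g1 g2 a x1 x y1 y2) x2 = 0 := by
  have hd : x1 - x2 ≠ 0 := sub_ne_zero.2 hdist
  have hg1' : HasDerivAt g1 (deriv g1 x1) x1 :=
    ((hg1.differentiable (by simp)) x1).hasDerivAt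
  have hg2' : HasDerivAt g2 (deriv g2 x2) x2 :=
    ((hg2.differentiable (by simp)) x2).hasDerivAt
  set p := deriv g1 x1
  set q := deriv g2 x2
  set A := Real.exp (a * y1) with hAdef
  set B := Real.exp (a * y2) with hBdef
  have hA : HasDerivAt (fun y => Real.exp (a * y)) (A * a) y1 := by
    simpa [Function.comp_def] using (Real.hasDerivAt_exp (a * y1)).comp y1 ((hasDerivAt_id y1).const_mul a)
  have hB : HasDerivAt (fun y => Real.exp (a * y)) (B * a) y2 := by
    simpa [Function.comp_def] using (Real.hasDerivAt_exp (a * y2)).comp y2 ((hasDerivAt_id y2).const_mul a)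
  -- ∂H/∂x1
  have dHx1 : HasDerivAt (fun x => H2 g1 g2 a x x2 y1 y2)
      ((p * A * (x1 - x2) - (g1 x1 * A - g2 x2 * B) * 1) / (x1 - x2) ^ 2) x1 := by
    exact ((hg1'.mul_const A).sub_const (g2 x2 * B)).div
      ((hasDerivAt_id x1).sub_const x2) hd
  -- ∂K/∂x1
  have dKx1 : HasDerivAt (fun x => K2 g1 g2 a x x2 y1 y2)
      (((x2 * p * A - 1 * g2 x2 * B) * (x1 - x2)
        - (x2 * g1 x1 * A - x1 * g2 x2 * B) * 1) / (x1 - x2) ^ 2) x1 := by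
    have hn : HasDerivAt (fun x => x2 * g1 x * A - x * g2 x2 * B)
        (x2 * p * A - 1 * g2 x2 * B) x1 :=
      ((hg1'.const_mul x2).mul_const A).sub
        (((hasDerivAt_id x1).mul_const (g2 x2)).mul_const B)
    exact hn.div ((hasDerivAt_id x1).sub_const x2) hd
  -- ∂H/∂x2
  have dHx2 : HasDerivAt (fun x => H2 g1 g2 a x1 x y1 y2)
      ((-(q * B) * (x1 - x2) - (g1 x1 * A - g2 x2 * B) * (-1)) / (x1 - x2) ^ 2) x2 := by
    have hn : HasDerivAt (fun x => g1 x1 * A - g2 x * B) (-(q * B)) x2 := by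
      simpa using ((hg2'.mul_const B).const_sub (g1 x1 * A))
    have hden : HasDerivAt (fun x => x1 - x) (-1 : ℝ) x2 := by
      simpa using ((hasDerivAt_id x2).const_sub x1)
    exact hn.div hden hd
  -- ∂K/∂x2
  have dKx2 : HasDerivAt (fun x => K2 g1 g2 a x1 x y1 y2)
      (((1 * g1 x1 * A - x1 * q * B) * (x1 - x2)
        - (x2 * g1 x1 * A - x1 * g2 x2 * B) * (-1)) / (x1 - x2) ^ 2) x2 := by
    have hn : HasDerivAt (fun x => x * g1 x1 * A - x1 * g2 x * B)
        (1 * g1 x1 * A - x1 * q * B) x2 := by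
      have h1 : HasDerivAt (fun x => x * g1 x1 * A) (1 * g1 x1 * A) x2 :=
        ((hasDerivAt_id x2).mul_const (g1 x1)).mul_const A
      have h2 : HasDerivAt (fun x => x1 * g2 x * B) (x1 * q * B) x2 :=
        (hg2'.const_mul x1).mul_const B
      exact h1.sub h2
    have hden : HasDerivAt (fun x => x1 - x) (-1 : ℝ) x2 := by
      simpa using ((hasDerivAt_id x2).const_sub x1)
    exact hn.div hden hd
  -- ∂H/∂y1
  have dHy1 : HasDerivAt (fun y => H2 g1 g2 a x1 x2 y y2)
      ((g1 x1 * (A * a)) / (x1 - x2)) y1 :=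
    ((hA.const_mul (g1 x1)).sub_const (g2 x2 * B)).div_const (x1 - x2)
  -- ∂K/∂y1
  have dKy1 : HasDerivAt (fun y => K2 g1 g2 a x1 x2 y y2)
      ((x2 * g1 x1 * (A * a)) / (x1 - x2)) y1 :=
    ((hA.const_mul (x2 * g1 x1)).sub_const (x1 * g2 x2 * B)).div_const (x1 - x2)
  -- ∂H/∂y2
  have dHy2 : HasDerivAt (fun y => H2 g1 g2 a x1 x2 y1 y)
      ((-(g2 x2 * (B * a))) / (x1 - x2)) y2 := by
    have hn : HasDerivAt (fun y => g1 x1 * A - g2 x2 * Real.exp (a * y))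
        (-(g2 x2 * (B * a))) y2 := by
      simpa using ((hB.const_mul (g2 x2)).const_sub (g1 x1 * A))
    exact hn.div_const (x1 - x2)
  -- ∂K/∂y2
  have dKy2 : HasDerivAt (fun y => K2 g1 g2 a x1 x2 y1 y)
      ((-(x1 * g2 x2 * (B * a))) / (x1 - x2)) y2 := by
    have hn : HasDerivAt (fun y => x2 * g1 x1 * A - x1 * g2 x2 * Real.exp (a * y))
        (-(x1 * g2 x2 * (B * a))) y2 := by
      simpa using ((hB.const_mul (x1 * g2 x2)).const_sub (x2 * g1 x1 * A))
    exact hn.div_const (x1 - x2)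
  rw [dHx1.deriv, dKx1.deriv, dHx2.deriv, dKx2.deriv, dHy1.deriv, dKy1.deriv,
    dHy2.deriv, dKy2.deriv]
  field_simp
  ring
end

section
/- For the n = 2 Hamiltonian H = (g₁(λ₁)e^{aμ₁} - g₂(λ₂)e^{aμ₂})/(λ₁ - λ₂), the functions c₁ = -(λ₁+λ₂) and c₂ = λ₁λ₂ satisfy c̈₁ = 0 and c̈₂ = 0 along any solution of the canonical Hamilton equations on λ₁ ≠ λ₂, i.e., their second time derivatives vanish. -/
open Real

lemma dHy1 (g1 g2 : ℝ → ℝ) (a x1 x2 y1 y2 : ℝ) :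
    deriv (fun y => H2 g1 g2 a x1 x2 y y2) y1
      = a * (g1 x1 * Real.exp (a * y1)) / (x1 - x2) := by
  have ha : HasDerivAt (fun y : ℝ => a * y) a y1 := by
    simpa using (hasDerivAt_id y1).const_mul a
  have h : HasDerivAt (fun y => H2 g1 g2 a x1 x2 y y2)
      ((g1 x1 * (Real.exp (a * y1) * a)) / (x1 - x2)) y1 := by
    unfold H2
    exact ((ha.exp.const_mul (g1 x1)).sub_const _).div_const _
  rw [h.deriv]; ring

lemma dHy2 (g1 g2 : ℝ → ℝ) (a x1 x2 y1 y2 : ℝ) :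
    deriv (fun y => H2 g1 g2 a x1 x2 y1 y) y2
      = -(a * (g2 x2 * Real.exp (a * y2))) / (x1 - x2) := by
  have ha : HasDerivAt (fun y : ℝ => a * y) a y2 := by
    simpa using (hasDerivAt_id y2).const_mul a
  have h : HasDerivAt (fun y => H2 g1 g2 a x1 x2 y1 y)
      ((-(g2 x2 * (Real.exp (a * y2) * a))) / (x1 - x2)) y2 := by
    unfold H2
    exact ((ha.exp.const_mul (g2 x2)).const_sub _).div_const _
  rw [h.deriv]; ring

lemma dHx1 (g1 g2 : ℝ → ℝ) (a x1 x2 y1 y2 : ℝ) (hg1 : DifferentiableAt ℝ g1 x1)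
    (h : x1 - x2 ≠ 0) :
    deriv (fun x => H2 g1 g2 a x x2 y1 y2) x1
      = (deriv g1 x1 * Real.exp (a * y1) * (x1 - x2)
          - (g1 x1 * Real.exp (a * y1) - g2 x2 * Real.exp (a * y2))) / (x1 - x2) ^ 2 := by
  have hN : HasDerivAt (fun x => g1 x * Real.exp (a * y1) - g2 x2 * Real.exp (a * y2))
      (deriv g1 x1 * Real.exp (a * y1)) x1 :=
    (hg1.hasDerivAt.mul_const _).sub_const _
  have hQ : HasDerivAt (fun x : ℝ => x - x2) 1 x1 := (hasDerivAt_id x1).sub_const _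
  have hh := hN.div hQ h
  rw [show (fun x => H2 g1 g2 a x x2 y1 y2)
      = fun x => (g1 x * Real.exp (a * y1) - g2 x2 * Real.exp (a * y2)) / (x - x2) from rfl,
    (show deriv (fun x => (g1 x * Real.exp (a * y1) - g2 x2 * Real.exp (a * y2)) / (x - x2)) x1
      = _ from hh.deriv)]
  ring

lemma dHx2 (g1 g2 : ℝ → ℝ) (a x1 x2 y1 y2 : ℝ) (hg2 : DifferentiableAt ℝ g2 x2)
    (h : x1 - x2 ≠ 0) :
    deriv (fun x => H2 g1 g2 a x1 x y1 y2) x2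
      = (-(deriv g2 x2 * Real.exp (a * y2)) * (x1 - x2)
          + (g1 x1 * Real.exp (a * y1) - g2 x2 * Real.exp (a * y2))) / (x1 - x2) ^ 2 := by
  have hN : HasDerivAt (fun x => g1 x1 * Real.exp (a * y1) - g2 x * Real.exp (a * y2))
      (-(deriv g2 x2 * Real.exp (a * y2))) x2 :=
    (hg2.hasDerivAt.mul_const _).const_sub _
  have hQ : HasDerivAt (fun x : ℝ => x1 - x) (-1) x2 := by
    simpa using (hasDerivAt_id x2).const_sub x1
  have hh := hN.div hQ h
  rw [show (fun x => H2 g1 g2 a x1 x y1 y2)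
      = fun x => (g1 x1 * Real.exp (a * y1) - g2 x * Real.exp (a * y2)) / (x1 - x) from rfl,
    (show deriv (fun x => (g1 x1 * Real.exp (a * y1) - g2 x * Real.exp (a * y2)) / (x1 - x)) x2
      = _ from hh.deriv)]
  ring

/-- for the `n = 2` Hamiltonian `H2`, the functions
`c₁ = -(λ₁+λ₂)` and `c₂ = λ₁λ₂` have vanishing second time derivative along
any solution of the canonical Hamilton equations on `λ₁ ≠ λ₂`. -/
theorem stmt7 (g1 g2 : ℝ → ℝ) (hg1 : ContDiff ℝ (⊤ : ℕ∞) g1) (hg2 : ContDiff ℝ (⊤ : ℕ∞) g2) (a : ℝ)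
    (l1 l2 m1 m2 l1' l2' m1' m2' : ℝ → ℝ)
    (hdist : ∀ t, l1 t ≠ l2 t)
    (hl1 : ∀ t, HasDerivAt l1 (l1' t) t) (hl2 : ∀ t, HasDerivAt l2 (l2' t) t)
    (hm1 : ∀ t, HasDerivAt m1 (m1' t) t) (hm2 : ∀ t, HasDerivAt m2 (m2' t) t)
    (ham1 : ∀ t, l1' t = deriv (fun y => H2 g1 g2 a (l1 t) (l2 t) y (m2 t)) (m1 t))
    (ham2 : ∀ t, l2' t = deriv (fun y => H2 g1 g2 a (l1 t) (l2 t) (m1 t) y) (m2 t))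
    (ham3 : ∀ t, m1' t = - deriv (fun x => H2 g1 g2 a x (l2 t) (m1 t) (m2 t)) (l1 t))
    (ham4 : ∀ t, m2' t = - deriv (fun x => H2 g1 g2 a (l1 t) x (m1 t) (m2 t)) (l2 t)) :
    ∀ t : ℝ,
      HasDerivAt (deriv (fun s => -(l1 s + l2 s))) 0 t ∧
      HasDerivAt (deriv (fun s => l1 s * l2 s)) 0 t := by
  have hg1d : Differentiable ℝ g1 := hg1.differentiable (by simp)
  have hg2d : Differentiable ℝ g2 := hg2.differentiable (by simp)
  have hDs : ∀ s, l1 s - l2 s ≠ 0 := fun s => sub_ne_zero.2 (hdist s)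
  -- explicit formulas for the velocities
  have hl1' : ∀ s, l1' s = a * (g1 (l1 s) * Real.exp (a * m1 s)) / (l1 s - l2 s) := by
    intro s; rw [ham1 s, dHy1]
  have hl2' : ∀ s, l2' s = -(a * (g2 (l2 s) * Real.exp (a * m2 s))) / (l1 s - l2 s) := by
    intro s; rw [ham2 s, dHy2]
  intro t
  have hD : l1 t - l2 t ≠ 0 := hDs t
  have hm1t : m1' t = -((deriv g1 (l1 t) * Real.exp (a * m1 t) * (l1 t - l2 t)
      - (g1 (l1 t) * Real.exp (a * m1 t) - g2 (l2 t) * Real.exp (a * m2 t)))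
        / (l1 t - l2 t) ^ 2) := by
    rw [ham3 t, dHx1 g1 g2 a _ _ _ _ (hg1d _) hD]
  have hm2t : m2' t = -((-(deriv g2 (l2 t) * Real.exp (a * m2 t)) * (l1 t - l2 t)
      + (g1 (l1 t) * Real.exp (a * m1 t) - g2 (l2 t) * Real.exp (a * m2 t)))
        / (l1 t - l2 t) ^ 2) := by
    rw [ham4 t, dHx2 g1 g2 a _ _ _ _ (hg2d _) hD]
  -- derivatives of the building blocks u, v, D at t
  have hu : HasDerivAt (fun s => g1 (l1 s) * Real.exp (a * m1 s))
      (deriv g1 (l1 t) * l1' t * Real.exp (a * m1 t)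
        + g1 (l1 t) * (Real.exp (a * m1 t) * (a * m1' t))) t := by
    have h1 : HasDerivAt (fun s => g1 (l1 s)) (deriv g1 (l1 t) * l1' t) t :=
      (hg1d (l1 t)).hasDerivAt.comp t (hl1 t)
    have h2 : HasDerivAt (fun s => Real.exp (a * m1 s))
        (Real.exp (a * m1 t) * (a * m1' t)) t := ((hm1 t).const_mul a).exp
    exact h1.mul h2
  have hv : HasDerivAt (fun s => g2 (l2 s) * Real.exp (a * m2 s))
      (deriv g2 (l2 t) * l2' t * Real.exp (a * m2 t)
        + g2 (l2 t) * (Real.exp (a * m2 t) * (a * m2' t))) t := by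
    have h1 : HasDerivAt (fun s => g2 (l2 s)) (deriv g2 (l2 t) * l2' t) t :=
      (hg2d (l2 t)).hasDerivAt.comp t (hl2 t)
    have h2 : HasDerivAt (fun s => Real.exp (a * m2 s))
        (Real.exp (a * m2 t) * (a * m2' t)) t := ((hm2 t).const_mul a).exp
    exact h1.mul h2
  have hDD : HasDerivAt (fun s => l1 s - l2 s) (l1' t - l2' t) t := (hl1 t).sub (hl2 t)
  have hAu := (hu.const_mul a).div hDD hD
  have hAv := ((hv.const_mul a).neg).div hDD hD
  constructor
  · -- c₁'' = 0
    have hder1 : deriv (fun s => -(l1 s + l2 s))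
        = fun s => -(a * (g1 (l1 s) * Real.exp (a * m1 s)) / (l1 s - l2 s)
            + -(a * (g2 (l2 s) * Real.exp (a * m2 s))) / (l1 s - l2 s)) := by
      funext s
      rw [(show deriv (fun s => -(l1 s + l2 s)) s = _ from (((hl1 s).add (hl2 s)).neg).deriv), hl1' s, hl2' s]
    rw [hder1]
    have hbig : HasDerivAt (fun s => -(a * (g1 (l1 s) * Real.exp (a * m1 s)) / (l1 s - l2 s)
        + -(a * (g2 (l2 s) * Real.exp (a * m2 s))) / (l1 s - l2 s))) _ t := (hAu.add hAv).neg
    convert hbig using 1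
    rw [hl1' t, hl2' t, hm1t, hm2t]
    simp only [Pi.neg_apply, Pi.div_apply]
    field_simp
    ring
  · -- c₂'' = 0
    have hder2 : deriv (fun s => l1 s * l2 s)
        = fun s => a * (g1 (l1 s) * Real.exp (a * m1 s)) / (l1 s - l2 s) * l2 s
            + l1 s * (-(a * (g2 (l2 s) * Real.exp (a * m2 s))) / (l1 s - l2 s)) := by
      funext s
      rw [(show deriv (fun s => l1 s * l2 s) s = _ from ((hl1 s).mul (hl2 s)).deriv), hl1' s, hl2' s]
    rw [hder2]
    have hbig : HasDerivAt (fun s => a * (g1 (l1 s) * Real.exp (a * m1 s)) / (l1 s - l2 s) * l2 s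
        + l1 s * (-(a * (g2 (l2 s) * Real.exp (a * m2 s))) / (l1 s - l2 s))) _ t :=
      (hAu.mul (hl2 t)).add ((hl1 t).mul hAv)
    convert hbig using 1
    rw [hl1' t, hl2' t, hm1t, hm2t]
    simp only [Pi.neg_apply, Pi.div_apply]
    field_simp
    ring
end
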